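/- Let M ≥ 1 and let δ : ℤ → ℝ be a sequence with δ n > 0 and 1/M ≤ δ_{n+1}/δ_n ≤ M for all n ∈ ℤ. Then for every x ∈ ℝ and every t with 0 < t ≤ 5, M^{−10} ≤ (h_δ(x+t) − h_δ(x))/(h_δ(x) − h_δ(x−t)) ≤ M^{10}. -/

import Mathlib

/-- `Hmap δ n` is the value at the integer `n` of the developing map:
`H 0 = 0`, `H (n+1) = H n + δ n`. -/
noncomputable def Hmap (δ : ℤ → ℝ) (n : ℤ) : ℝ :=
  if 0 ≤ n then ∑ j ∈ Finset.range n.toNat, δ j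
  else -∑ j ∈ Finset.range (-n).toNat, δ (n + j)

/-- The piecewise linear developing map associated to the sequence `δ`. -/
noncomputable def hdev (δ : ℤ → ℝ) (x : ℝ) : ℝ :=
  Hmap δ ⌊x⌋ + δ ⌊x⌋ * (x - (⌊x⌋ : ℝ))

/-- The quasisymmetric shear condition with constant `M` for a positive sequence `δ`:
`1/M ≤ (δ m + ⋯ + δ (m+k)) / (δ (m-1) + ⋯ + δ (m-k-1)) ≤ M`. -/
def ShearQS (δ : ℤ → ℝ) (M : ℝ) : Prop :=
  ∀ (m : ℤ) (k : ℕ),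
    1 / M ≤ (∑ i ∈ Finset.range (k + 1), δ (m + (i : ℤ))) /
        (∑ i ∈ Finset.range (k + 1), δ (m - 1 - (i : ℤ))) ∧
      (∑ i ∈ Finset.range (k + 1), δ (m + (i : ℤ))) /
        (∑ i ∈ Finset.range (k + 1), δ (m - 1 - (i : ℤ))) ≤ M

/-- The `M`-quasisymmetry condition for a map `h : ℝ → ℝ`. -/
def QSCond (h : ℝ → ℝ) (M : ℝ) : Prop :=
  ∀ (x t : ℝ), 0 < t →
    1 / M ≤ (h (x + t) - h x) / (h x - h (x - t)) ∧
      (h (x + t) - h x) / (h x - h (x - t)) ≤ M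

/-!
`hdev δ` is continuous and affine with slope `δ n` on `[n, n + 1]`, so an increment
`hdev δ y' - hdev δ y` lies between `y' - y` times the smallest and the largest slope met on
`[y, y']`. For `t ≤ 5` every slope met on `[x - t, x + t]` is within `5` steps, hence within a
factor `M ^ 5`, of `δ ⌊x⌋`; so both increments lie in `[c t, M ^ 10 c t]` with
`c = δ ⌊x⌋ / M ^ 5`, and their ratio lies in `[M ^ (-10), M ^ 10]`.
-/

open Set

section Developing

variable (δ : ℤ → ℝ)

lemma Hmap_succ (n : ℤ) : Hmap δ (n + 1) = Hmap δ n + δ n := by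
  unfold Hmap
  rcases lt_trichotomy n (-1) with hn | rfl | hn
  · rw [if_neg (by omega), if_neg (by omega),
      show (-n).toNat = (-(n + 1)).toNat + 1 by omega, Finset.sum_range_succ']
    have hshift : ∀ i : ℕ, n + ((i + 1 : ℕ) : ℤ) = n + 1 + i := fun i => by push_cast; ring
    simp only [hshift, Nat.cast_zero, add_zero]
    ring
  · simp
  · rw [if_pos (by omega), if_pos (by omega), show (n + 1).toNat = n.toNat + 1 by omega,
      Finset.sum_range_succ, Int.toNat_of_nonneg (by omega)]

lemma Hmap_neg (n : ℤ) : Hmap (-δ) n = -Hmap δ n := by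
  unfold Hmap
  split_ifs <;> simp [Finset.sum_neg_distrib]

lemma hdev_neg (x : ℝ) : hdev (-δ) x = -hdev δ x := by
  simp only [hdev, Hmap_neg, Pi.neg_apply]
  ring

lemma hdev_eq_of_mem_Icc {n : ℤ} {y : ℝ} (hy : y ∈ Icc (n : ℝ) (n + 1)) :
    hdev δ y = Hmap δ n + δ n * (y - n) := by
  rcases hy.2.lt_or_eq with hlt | rfl
  · simp [hdev, Int.floor_eq_iff.mpr ⟨hy.1, hlt⟩]
  · have : ⌊(n : ℝ) + 1⌋ = n + 1 := by exact_mod_cast Int.floor_intCast (n + 1)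
    simp [hdev, this, Hmap_succ]

lemma hdev_sub_of_mem_Icc {n : ℤ} {y y' : ℝ} (hy : y ∈ Icc (n : ℝ) (n + 1))
    (hy' : y' ∈ Icc (n : ℝ) (n + 1)) : hdev δ y' - hdev δ y = δ n * (y' - y) := by
  rw [hdev_eq_of_mem_Icc δ hy, hdev_eq_of_mem_Icc δ hy']
  ring

lemma hdev_sub_le {c y y' : ℝ} (hyy' : y ≤ y') (hc : ∀ n ∈ Icc ⌊y⌋ ⌊y'⌋, δ n ≤ c) :
    hdev δ y' - hdev δ y ≤ c * (y' - y) := by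
  obtain ⟨k, hk⟩ : ∃ k : ℕ, ⌊y'⌋ = ⌊y⌋ + k :=
    ⟨(⌊y'⌋ - ⌊y⌋).toNat, by have := Int.floor_mono hyy'; omega⟩
  have hy : y ∈ Icc (⌊y⌋ : ℝ) (⌊y⌋ + 1) := ⟨Int.floor_le y, (Int.lt_floor_add_one y).le⟩
  induction k generalizing y with
  | zero =>
    have hy' : y' ∈ Icc (⌊y⌋ : ℝ) (⌊y⌋ + 1) := by
      simp only [Nat.cast_zero, add_zero] at hk
      exact hk ▸ ⟨Int.floor_le y', (Int.lt_floor_add_one y').le⟩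
    rw [hdev_sub_of_mem_Icc δ hy hy']
    exact mul_le_mul_of_nonneg_right (hc _ ⟨le_rfl, by omega⟩) (sub_nonneg.mpr hyy')
  | succ k ih =>
    set z : ℝ := ⌊y⌋ + 1
    have hz : ⌊z⌋ = ⌊y⌋ + 1 := by rw [Int.floor_add_one, Int.floor_intCast]
    have hzy' : z ≤ y' := by
      calc z = ((⌊y⌋ + 1 : ℤ) : ℝ) := by push_cast; rfl
        _ ≤ ⌊y'⌋ := by exact_mod_cast (by omega : ⌊y⌋ + 1 ≤ ⌊y'⌋)
        _ ≤ y' := Int.floor_le y'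
    have hleft : hdev δ z - hdev δ y ≤ c * (z - y) := by
      rw [hdev_sub_of_mem_Icc δ hy ⟨by simp, le_rfl⟩]
      exact mul_le_mul_of_nonneg_right (hc _ ⟨le_rfl, by omega⟩) (sub_nonneg.mpr hy.2)
    have hright := ih hzy' (fun n hn => hc n ⟨by linarith [hn.1], hn.2⟩) (by omega)
      ⟨hz ▸ Int.floor_le z, hz ▸ (Int.lt_floor_add_one z).le⟩
    linarith

lemma hdev_sub_mem_Icc {lo hi y y' : ℝ} (hyy' : y ≤ y')
    (hδ : ∀ n ∈ Icc ⌊y⌋ ⌊y'⌋, δ n ∈ Icc lo hi) :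
    hdev δ y' - hdev δ y ∈ Icc (lo * (y' - y)) (hi * (y' - y)) := by
  refine ⟨?_, hdev_sub_le δ hyy' fun n hn => (hδ n hn).2⟩
  have := hdev_sub_le (-δ) hyy' (c := -lo) fun n hn => neg_le_neg (hδ n hn).1
  rw [hdev_neg, hdev_neg] at this
  linarith

end Developing

section Growth

variable {δ : ℤ → ℝ} {M : ℝ}

lemma le_pow_mul_add_of_succ_le (hM : 0 ≤ M) (h : ∀ n, δ (n + 1) ≤ M * δ n) (n : ℤ) (k : ℕ) :
    δ (n + k) ≤ M ^ k * δ n := by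
  induction k with
  | zero => simp
  | succ k ih =>
    calc δ (n + (k + 1 : ℕ)) = δ (n + k + 1) := by push_cast; ring_nf
      _ ≤ M * δ (n + k) := h _
      _ ≤ M * (M ^ k * δ n) := mul_le_mul_of_nonneg_left ih hM
      _ = M ^ (k + 1) * δ n := by ring

lemma le_pow_mul_sub_of_le_succ (hM : 0 ≤ M) (h : ∀ n, δ n ≤ M * δ (n + 1)) (n : ℤ) (k : ℕ) :
    δ (n - k) ≤ M ^ k * δ n := by
  have := le_pow_mul_add_of_succ_le (δ := fun m => δ (-m)) hM
    (fun m => by convert h (-(m + 1)) using 3; ring) (-n) k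
  simpa [neg_add_eq_sub] using this

lemma le_pow_mul_of_natAbs_sub_le (hM : 1 ≤ M) (hδ : ∀ n, 0 ≤ δ n)
    (hup : ∀ n, δ (n + 1) ≤ M * δ n) (hdown : ∀ n, δ n ≤ M * δ (n + 1)) {m n : ℤ} {K : ℕ}
    (hmn : (m - n).natAbs ≤ K) : δ m ≤ M ^ K * δ n :=
  calc δ m ≤ M ^ (m - n).natAbs * δ n := by
        rcases le_total n m with hnm | hmn
        · have := le_pow_mul_add_of_succ_le (zero_le_one.trans hM) hup n (m - n).natAbs
          rwa [show n + ((m - n).natAbs : ℤ) = m by omega] at this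
        · have := le_pow_mul_sub_of_le_succ (zero_le_one.trans hM) hdown n (m - n).natAbs
          rwa [show n - ((m - n).natAbs : ℤ) = m by omega] at this
    _ ≤ M ^ K * δ n := mul_le_mul_of_nonneg_right (pow_le_pow_right₀ hM hmn) (hδ n)

end Growth

lemma natAbs_sub_floor_le {x t : ℝ} {K : ℕ} (htK : t ≤ K) {n : ℤ}
    (hn : n ∈ Icc ⌊x - t⌋ ⌊x + t⌋) : (n - ⌊x⌋).natAbs ≤ K := by
  have hup : ⌊x + t⌋ ≤ ⌊x⌋ + K := by
    rw [← Int.floor_add_natCast]; exact Int.floor_mono (by linarith)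
  have hlow : ⌊x⌋ - K ≤ ⌊x - t⌋ := by
    rw [← Int.floor_sub_natCast]; exact Int.floor_mono (by linarith)
  have := hn.1; have := hn.2
  omega

lemma one_div_le_div_and_div_le {K L a b : ℝ} (hL : 0 < L) (ha : a ∈ Icc L (K * L))
    (hb : b ∈ Icc L (K * L)) : 1 / K ≤ a / b ∧ a / b ≤ K := by
  have hb0 : 0 < b := hL.trans_le hb.1
  have hK : 0 < K := pos_of_mul_pos_left (hL.trans_le (ha.1.trans ha.2)) hL.le
  constructor
  · rw [div_le_div_iff₀ hK hb0]; nlinarith [ha.1, hb.2]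
  · rw [div_le_iff₀ hb0]; nlinarith [ha.2, hb.1]

theorem small_scale_quasisymmetry (M : ℝ) (hM : 1 ≤ M) (δ : ℤ → ℝ)
    (hpos : ∀ n, 0 < δ n)
    (hratio : ∀ n : ℤ, 1 / M ≤ δ (n + 1) / δ n ∧ δ (n + 1) / δ n ≤ M) :
    ∀ (x t : ℝ), 0 < t → t ≤ 5 →
      1 / M ^ 10 ≤ (hdev δ (x + t) - hdev δ x) / (hdev δ x - hdev δ (x - t)) ∧
        (hdev δ (x + t) - hdev δ x) / (hdev δ x - hdev δ (x - t)) ≤ M ^ 10 := by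
  intro x t ht ht5
  have hM0 : 0 < M := zero_lt_one.trans_le hM
  have hup (n : ℤ) : δ (n + 1) ≤ M * δ n := (div_le_iff₀ (hpos n)).mp (hratio n).2
  have hdown (n : ℤ) : δ n ≤ M * δ (n + 1) := by
    have := (div_le_div_iff₀ hM0 (hpos n)).mp (hratio n).1
    linarith
  have hcomp {m n : ℤ} (hmn : (m - n).natAbs ≤ 5) : δ m ≤ M ^ 5 * δ n :=
    le_pow_mul_of_natAbs_sub_le hM (fun n => (hpos n).le) hup hdown hmn
  set c := δ ⌊x⌋ / M ^ 5
  have hslope : ∀ n ∈ Icc ⌊x - t⌋ ⌊x + t⌋, δ n ∈ Icc c (M ^ 10 * c) := fun n hn => by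
    have hnx := natAbs_sub_floor_le (K := 5) (by exact_mod_cast ht5) hn
    refine ⟨(div_le_iff₀ (by positivity)).mpr ?_, ?_⟩
    · simpa [mul_comm] using hcomp (by omega : (⌊x⌋ - n).natAbs ≤ 5)
    · calc δ n ≤ M ^ 5 * δ ⌊x⌋ := hcomp hnx
        _ = M ^ 10 * c := by simp only [c]; field_simp
  have hforward := hdev_sub_mem_Icc δ (le_add_of_nonneg_right ht.le)
    fun n hn => hslope n ⟨(Int.floor_mono (by linarith)).trans hn.1, hn.2⟩
  have hbackward := hdev_sub_mem_Icc δ (sub_le_self x ht.le)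
    fun n hn => hslope n ⟨hn.1, hn.2.trans (Int.floor_mono (by linarith))⟩
  rw [add_sub_cancel_left, mul_assoc] at hforward
  rw [sub_sub_cancel, mul_assoc] at hbackward
  exact one_div_le_div_and_div_le (mul_pos (div_pos (hpos _) (by positivity)) ht)
    hforward hbackward
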